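/- Let ℓ ≥ 1 be a natural number and fix a point j = (j₁, j₂, j₃) ∈ L_ℓ. Define f_j : L_ℓ → L_ℓ by f_j((i₁, i₂, i₃)) = ((ℓ+1−j₁+i₁) mod' (2ℓ+1), (ℓ+1−j₂+i₂) mod' (2ℓ+1), (ℓ+1−j₃+i₃) mod' (2ℓ+1)). Then for every point x = (i₁, i₂, i₃) ∈ L_ℓ, the Euclidean distance from f_j(x) to the centre c = (ℓ+1, ℓ+1, ℓ+1) satisfies |f_j(x) − c| ≤ |x − j|. -/

import Mathlib

open Finset

/-- The point of `ℝ³` (with the Euclidean metric) corresponding to an integer triple. -/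
noncomputable def pt (i : ℤ × ℤ × ℤ) : EuclideanSpace ℝ (Fin 3) :=
  (WithLp.equiv 2 (Fin 3 → ℝ)).symm ![(i.1 : ℝ), (i.2.1 : ℝ), (i.2.2 : ℝ)]

/-- The lattice cube `L_ℓ`: integer triples `(i₁,i₂,i₃)` with `1 ≤ i₁,i₂,i₃ ≤ 2ℓ+1`. -/
noncomputable def latticeCube (ℓ : ℕ) : Finset (ℤ × ℤ × ℤ) :=
  Finset.Icc 1 (2 * (ℓ : ℤ) + 1) ×ˢ Finset.Icc 1 (2 * (ℓ : ℤ) + 1) ×ˢ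
    Finset.Icc 1 (2 * (ℓ : ℤ) + 1)

/-- `mod' m q`: the unique integer congruent to `m` modulo `q` lying in `{1, 2, …, q}`
(so `mod' q q = q` rather than `0`), for `q ≥ 1`. -/
def mod' (m q : ℤ) : ℤ := (m - 1) % q + 1

/-- The translation-mod map `f_j` on the lattice cube `L_ℓ`, sending `(i₁,i₂,i₃)` to
`((ℓ+1−j₁+i₁) mod' (2ℓ+1), (ℓ+1−j₂+i₂) mod' (2ℓ+1), (ℓ+1−j₃+i₃) mod' (2ℓ+1))`. -/
def fj (ℓ : ℕ) (j : ℤ × ℤ × ℤ) (i : ℤ × ℤ × ℤ) : ℤ × ℤ × ℤ :=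
  (mod' ((ℓ : ℤ) + 1 - j.1 + i.1) (2 * (ℓ : ℤ) + 1),
   mod' ((ℓ : ℤ) + 1 - j.2.1 + i.2.1) (2 * (ℓ : ℤ) + 1),
   mod' ((ℓ : ℤ) + 1 - j.2.2 + i.2.2) (2 * (ℓ : ℤ) + 1))

/-!
Coordinatewise, `mod' (ℓ + 1 - j + i) (2ℓ + 1) - (ℓ + 1)` is the representative of `i - j` modulo
`2ℓ + 1` in the balanced range `[-ℓ, ℓ]`. It equals `i - j` when `|i - j| ≤ ℓ` and otherwise has
absolute value at most `ℓ < |i - j|`, so each coordinate difference shrinks and so does the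
Euclidean distance.
-/

lemma abs_emod_two_mul_add_one_sub_le (d : ℤ) {ℓ : ℤ} (hℓ : 0 ≤ ℓ) :
    |(d + ℓ) % (2 * ℓ + 1) - ℓ| ≤ |d| := by
  have hr₀ : 0 ≤ (d + ℓ) % (2 * ℓ + 1) := Int.emod_nonneg _ (by omega)
  have hr₁ : (d + ℓ) % (2 * ℓ + 1) < 2 * ℓ + 1 := Int.emod_lt_of_pos _ (by omega)
  by_cases hd : |d| ≤ ℓ
  · rw [abs_le] at hd
    rw [Int.emod_eq_of_lt (by omega) (by omega), add_sub_cancel_right]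
  · rw [not_le] at hd
    rw [abs_le]
    constructor <;> linarith [neg_abs_le d, le_abs_self d]

lemma abs_mod'_sub_le {ℓ : ℤ} (hℓ : 0 ≤ ℓ) (i j : ℤ) :
    |mod' (ℓ + 1 - j + i) (2 * ℓ + 1) - (ℓ + 1)| ≤ |i - j| := by
  have h := abs_emod_two_mul_add_one_sub_le (i - j) hℓ
  unfold mod'
  rwa [show ℓ + 1 - j + i - 1 = i - j + ℓ by ring, add_sub_add_right_eq_sub]

lemma dist_pt_le_dist_pt {a b a' b' : ℤ × ℤ × ℤ} (h₁ : |a.1 - b.1| ≤ |a'.1 - b'.1|)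
    (h₂ : |a.2.1 - b.2.1| ≤ |a'.2.1 - b'.2.1|) (h₃ : |a.2.2 - b.2.2| ≤ |a'.2.2 - b'.2.2|) :
    dist (pt a) (pt b) ≤ dist (pt a') (pt b') := by
  have hsq {m n m' n' : ℤ} (h : |m - n| ≤ |m' - n'|) :
      dist (m : ℝ) n ^ 2 ≤ dist (m' : ℝ) n' ^ 2 := by
    rw [Real.dist_eq, Real.dist_eq, ← Int.cast_sub, ← Int.cast_sub, ← Int.cast_abs,
      ← Int.cast_abs]
    gcongr
  rw [EuclideanSpace.dist_eq, EuclideanSpace.dist_eq]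
  apply Real.sqrt_le_sqrt
  simp only [pt, Fin.sum_univ_three, WithLp.equiv_symm_apply, WithLp.ofLp_toLp,
    Matrix.cons_val_zero, Matrix.cons_val_one, Matrix.cons_val_two, Matrix.head_cons,
    Matrix.tail_cons]
  gcongr ?_ + ?_ + ?_
  exacts [hsq h₁, hsq h₂, hsq h₃]

theorem fj_decreases_distance_to_centre_general (ℓ : ℕ)
    (c : ℤ × ℤ × ℤ) (hc : c = ((ℓ : ℤ) + 1, (ℓ : ℤ) + 1, (ℓ : ℤ) + 1))
    (j : ℤ × ℤ × ℤ) :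
    ∀ x ∈ latticeCube ℓ, dist (pt (fj ℓ j x)) (pt c) ≤ dist (pt x) (pt j) := by
  intro x _
  subst hc
  have hℓ : (0 : ℤ) ≤ ℓ := Int.natCast_nonneg ℓ
  exact dist_pt_le_dist_pt (abs_mod'_sub_le hℓ _ _) (abs_mod'_sub_le hℓ _ _)
    (abs_mod'_sub_le hℓ _ _)

theorem fj_decreases_distance_to_centre (ℓ : ℕ) (hℓ : 1 ≤ ℓ)
    (c : ℤ × ℤ × ℤ) (hc : c = ((ℓ : ℤ) + 1, (ℓ : ℤ) + 1, (ℓ : ℤ) + 1))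
    (j : ℤ × ℤ × ℤ) (hj : j ∈ latticeCube ℓ) :
    ∀ x ∈ latticeCube ℓ, dist (pt (fj ℓ j x)) (pt c) ≤ dist (pt x) (pt j) :=
  fj_decreases_distance_to_centre_general ℓ c hc j
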